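/- For a family of partitions as above, the class-(a) quadratic variation sums converge: with probability 1, Σ_{(a)} f(s_{i−1},ω)(W_{s_i} − W_{s_{i−1}})² − Σ_{(a)} f(s_{i−1},ω)(s_i − s_{i−1}) → 0 as n → ∞. -/

import Mathlib

/-!
Write `ξᵢ = (W sᵢ₊₁ - W sᵢ)² - (sᵢ₊₁ - sᵢ)`, so that the class-(a) sum is the discrete
martingale transform `Vₙ = ∑ f(sᵢ) ξᵢ`. Each `ξᵢ` is centered and independent of `F sᵢ`, which
contains `f(sᵢ)` and every earlier term, so all cross terms of `E Vₙ²` vanish and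
`E Vₙ² = ∑ E f(sᵢ)² · E ξᵢ² = κ ∑ E f(sᵢ)² (sᵢ₊₁ - sᵢ)²` with `κ = E (Z² - 1)²`, `Z` standard
normal. On class (a) the mesh is below `2⁻ⁿ`, hence `E Vₙ² ≤ κ C (t₂ - t₁) 2⁻ⁿ`. These bounds are
summable, so `∑ Vₙ²` is finite almost surely and `Vₙ → 0` almost surely.
-/

open MeasureTheory ProbabilityTheory Filter Topology

/-- Backward jump operator of a time scale. -/
noncomputable def tsRho (T : Set ℝ) (t : ℝ) : ℝ := sSup {s | s ∈ T ∧ s < t}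

/-- A Brownian motion indexed by a time scale `T`. -/
def IsTimeScaleBM (T : Set ℝ) {Ω : Type*} [mΩ : MeasurableSpace Ω] (P : Measure Ω)
    (F : ℝ → MeasurableSpace Ω) (W : ℝ → Ω → ℝ) : Prop :=
  (∀ t, F t ≤ mΩ) ∧
  (∀ s t : ℝ, s ≤ t → F s ≤ F t) ∧
  (∀ t ∈ T ∪ {0}, @Measurable Ω ℝ (F t) _ (W t)) ∧
  (∀ᵐ ω ∂P, W 0 ω = 0) ∧
  (∀ s ∈ T, ∀ t ∈ T, s < t →
    Indep (MeasurableSpace.comap (fun ω => W t ω - W s ω) (borel ℝ)) (F s) P ∧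
    Measure.map (fun ω => W t ω - W s ω) P = gaussianReal 0 (Real.toNNReal (t - s))) ∧
  (∀ᵐ ω ∂P, ContinuousOn (fun t => W t ω) T)

open scoped NNReal ENNReal

theorem Fin.sum_succ_sub_castSucc {G : Type*} [AddCommGroup G] {M : ℕ} (σ : Fin (M + 1) → G) :
    ∑ i : Fin M, (σ i.succ - σ i.castSucc) = σ (Fin.last M) - σ 0 := by
  induction M with
  | zero => simp
  | succ M ih =>
    have h := ih fun j => σ j.castSucc
    rw [Fin.sum_univ_castSucc]
    simp only [Fin.succ_castSucc, h, Fin.succ_last, Fin.castSucc_zero]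
    abel

theorem Fin.sum_sq_succ_sub_castSucc_le {M : ℕ} {σ : Fin (M + 1) → ℝ} (hσ : Monotone σ)
    {A : Finset (Fin M)} {δ : ℝ} (hδ : 0 ≤ δ) (hA : ∀ i ∈ A, σ i.succ - σ i.castSucc ≤ δ) :
    ∑ i ∈ A, (σ i.succ - σ i.castSucc) ^ 2 ≤ δ * (σ (Fin.last M) - σ 0) := by
  have hΔ : ∀ i : Fin M, 0 ≤ σ i.succ - σ i.castSucc :=
    fun i => sub_nonneg.2 (hσ Fin.castSucc_lt_succ.le)
  calc ∑ i ∈ A, (σ i.succ - σ i.castSucc) ^ 2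
      ≤ ∑ i ∈ A, δ * (σ i.succ - σ i.castSucc) :=
        Finset.sum_le_sum fun i hi => by
          rw [sq]; exact mul_le_mul_of_nonneg_right (hA i hi) (hΔ i)
    _ ≤ ∑ i : Fin M, δ * (σ i.succ - σ i.castSucc) :=
        Finset.sum_le_sum_of_subset_of_nonneg A.subset_univ
          fun (i : Fin M) _ _ => mul_nonneg hδ (hΔ i)
    _ = δ * (σ (Fin.last M) - σ 0) := by rw [← Finset.mul_sum, Fin.sum_succ_sub_castSucc]

theorem MeasureTheory.ae_tendsto_zero_of_summable_integral_sq {Ω : Type*}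
    {mΩ : MeasurableSpace Ω} {P : Measure Ω} {V : ℕ → Ω → ℝ}
    (hV : ∀ n, Integrable (fun ω => V n ω ^ 2) P)
    (hsum : Summable fun n => ∫ ω, V n ω ^ 2 ∂P) :
    ∀ᵐ ω ∂P, Tendsto (fun n => V n ω) atTop (𝓝 0) := by
  have hlint : ∫⁻ ω, ∑' n, ENNReal.ofReal (V n ω ^ 2) ∂P ≠ ∞ := by
    rw [lintegral_tsum fun n => (hV n).aemeasurable.ennreal_ofReal]
    simp_rw [← ofReal_integral_eq_lintegral_ofReal (hV _) (ae_of_all _ fun ω => sq_nonneg _)]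
    rw [← ENNReal.ofReal_tsum_of_nonneg (fun n => integral_nonneg fun ω => sq_nonneg _) hsum]
    exact ENNReal.ofReal_ne_top
  filter_upwards [ae_lt_top' (AEMeasurable.tsum fun n => (hV n).aemeasurable.ennreal_ofReal)
    hlint] with ω hω
  have hsq : Tendsto (fun n => V n ω ^ 2) atTop (𝓝 0) := by
    simpa [ENNReal.toReal_ofReal (sq_nonneg _)] using
      (ENNReal.summable_toReal hω.ne).tendsto_atTop_zero
  have habs := (Real.continuous_sqrt.tendsto 0).comp hsq
  simp only [Function.comp_def, Real.sqrt_sq_eq_abs, Real.sqrt_zero] at habs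
  exact (tendsto_zero_iff_abs_tendsto_zero _).2 habs

namespace ProbabilityTheory

lemma integral_sq_gaussianReal (v : ℝ≥0) : ∫ x, x ^ 2 ∂gaussianReal 0 v = v := by
  rw [← variance_of_integral_eq_zero (X := fun x => x) aemeasurable_id integral_id_gaussianReal]
  exact variance_fun_id_gaussianReal

lemma memLp_sq_sub_gaussianReal (v : ℝ≥0) :
    MemLp (fun x => x ^ 2 - (v : ℝ)) 2 (gaussianReal 0 v) := by
  have h4 : Integrable (fun x : ℝ => ‖x‖ ^ 4) (gaussianReal 0 v) :=
    (memLp_id_gaussianReal (μ := 0) (v := v) 4).integrable_norm_pow (by norm_num)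
  refine MemLp.sub ?_ (memLp_const _)
  refine (memLp_two_iff_integrable_sq (by fun_prop)).2 (h4.congr (ae_of_all _ fun x => ?_))
  simp only [Real.norm_eq_abs]
  rw [show (4 : ℕ) = 2 * 2 from rfl, pow_mul, sq_abs]

lemma integral_sq_sub_sq_gaussianReal (v : ℝ≥0) :
    ∫ x, (x ^ 2 - (v : ℝ)) ^ 2 ∂gaussianReal 0 v
      = (v : ℝ) ^ 2 * ∫ x, (x ^ 2 - 1) ^ 2 ∂gaussianReal 0 1 := by
  -- scaling `N(0, v) = √v · N(0, 1)` spares us the fourth moment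
  have hmap : (gaussianReal 0 1).map (Real.sqrt v * ·) = gaussianReal 0 v := by
    rw [gaussianReal_map_const_mul]
    congr 1
    · simp
    · ext; simp
  rw [← hmap, integral_map (by fun_prop) (by fun_prop), ← integral_const_mul]
  congr 1 with x
  rw [mul_pow, Real.sq_sqrt v.coe_nonneg]
  ring

variable {Ω : Type*} {mΩ : MeasurableSpace Ω} {P : Measure Ω}

lemma HasLaw.memLp_sq_sub {D : Ω → ℝ} {v : ℝ≥0} (hD : HasLaw D (gaussianReal 0 v) P) :
    MemLp (fun ω => D ω ^ 2 - v) 2 P := by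
  have h := memLp_sq_sub_gaussianReal v
  rw [← hD.map_eq, memLp_map_measure_iff (by rw [hD.map_eq]; fun_prop) hD.aemeasurable] at h
  exact h

lemma HasLaw.integral_sq_sub {D : Ω → ℝ} {v : ℝ≥0} (hD : HasLaw D (gaussianReal 0 v) P) :
    ∫ ω, (D ω ^ 2 - v) ∂P = 0 := by
  have hsq : Integrable (fun x : ℝ => x ^ 2) (gaussianReal 0 v) :=
    (memLp_id_gaussianReal 2).integrable_sq
  have h := hD.integral_comp (f := fun x => x ^ 2 - (v : ℝ)) (by fun_prop)
  rw [integral_sub hsq (integrable_const _), integral_sq_gaussianReal] at h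
  simpa using h

lemma HasLaw.integral_sq_sub_sq {D : Ω → ℝ} {v : ℝ≥0} (hD : HasLaw D (gaussianReal 0 v) P) :
    ∫ ω, (D ω ^ 2 - v) ^ 2 ∂P = (v : ℝ) ^ 2 * ∫ x, (x ^ 2 - 1) ^ 2 ∂gaussianReal 0 1 := by
  rw [← integral_sq_sub_sq_gaussianReal]
  exact hD.integral_comp (f := fun x => (x ^ 2 - (v : ℝ)) ^ 2) (by fun_prop)

lemma IndepFun.memLp_two_mul {X Y : Ω → ℝ} (hXY : IndepFun X Y P) (hX : MemLp X 2 P)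
    (hY : MemLp Y 2 P) : MemLp (X * Y) 2 P := by
  refine (memLp_two_iff_integrable_sq (hX.1.mul hY.1)).2 ?_
  have h := (hXY.comp (measurable_id.pow_const 2) (measurable_id.pow_const 2)).integrable_mul
    hX.integrable_sq hY.integrable_sq
  exact h.congr (ae_of_all _ fun ω => by simp [mul_pow])

lemma Indep.indepFun_of_measurable {β γ : Type*} [mβ : MeasurableSpace β]
    [mγ : MeasurableSpace γ] {m : MeasurableSpace Ω} {ξ : Ω → β} {Y : Ω → γ}
    (h : Indep (MeasurableSpace.comap ξ mβ) m P) (hY : Measurable[m] Y) : IndepFun ξ Y P :=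
  (IndepFun_iff_Indep _ _ _).2 (indep_of_indep_of_le_right h hY.comap_le)

end ProbabilityTheory

namespace MeasureTheory.Adapted

variable {Ω ι : Type*} {mΩ : MeasurableSpace Ω} {P : Measure Ω} [LinearOrder ι]
  {𝓕 : Filtration ι mΩ} {X ξ : ι → Ω → ℝ}

lemma memLp_two_mul_of_indep (hX : Adapted 𝓕 X)
    (hindep : ∀ i, Indep (MeasurableSpace.comap (ξ i) inferInstance) (𝓕 i) P)
    (hXL2 : ∀ i, MemLp (X i) 2 P) (hξL2 : ∀ i, MemLp (ξ i) 2 P) (i : ι) :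
    MemLp (X i * ξ i) 2 P :=
  ((hindep i).indepFun_of_measurable (hX i)).symm.memLp_two_mul (hXL2 i) (hξL2 i)

lemma memLp_two_sum_mul (hX : Adapted 𝓕 X)
    (hindep : ∀ i, Indep (MeasurableSpace.comap (ξ i) inferInstance) (𝓕 i) P)
    (hXL2 : ∀ i, MemLp (X i) 2 P) (hξL2 : ∀ i, MemLp (ξ i) 2 P) (A : Finset ι) :
    MemLp (fun ω => ∑ i ∈ A, X i ω * ξ i ω) 2 P :=
  memLp_finsetSum A fun i _ => hX.memLp_two_mul_of_indep hindep hXL2 hξL2 i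

lemma integral_mul_mul_eq_zero_of_lt (hX : Adapted 𝓕 X)
    (hξ : ∀ i j, i < j → Measurable[𝓕 j] (ξ i))
    (hindep : ∀ i, Indep (MeasurableSpace.comap (ξ i) inferInstance) (𝓕 i) P)
    (hξ_meas : ∀ i, AEStronglyMeasurable (ξ i) P) (hξ_mean : ∀ i, P[ξ i] = 0) {i j : ι}
    (hij : i < j) :
    ∫ ω, (X i ω * ξ i ω) * (X j ω * ξ j ω) ∂P = 0 := by
  have hY : Measurable[𝓕 j] (fun ω => X i ω * ξ i ω * X j ω) :=
    ((hX.measurable_le hij.le).mul (hξ i j hij)).mul (hX j)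
  have h := ((hindep j).indepFun_of_measurable hY).integral_fun_mul_eq_mul_integral
    (hξ_meas j) (hY.mono (𝓕.le j) le_rfl).aestronglyMeasurable
  rw [hξ_mean, zero_mul] at h
  rw [← h]
  congr 1 with ω
  ring

lemma integral_sq_mul_eq (hX : Adapted 𝓕 X)
    (hindep : ∀ i, Indep (MeasurableSpace.comap (ξ i) inferInstance) (𝓕 i) P)
    (hξ_meas : ∀ i, AEStronglyMeasurable (ξ i) P) (i : ι) :
    ∫ ω, (X i ω * ξ i ω) ^ 2 ∂P = (∫ ω, X i ω ^ 2 ∂P) * ∫ ω, ξ i ω ^ 2 ∂P := by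
  have h := (((hindep i).indepFun_of_measurable (hX i)).symm.comp
    (measurable_id.pow_const 2) (measurable_id.pow_const 2)).integral_fun_mul_eq_mul_integral
    (hX.measurable.pow_const 2).aestronglyMeasurable (by have := hξ_meas i; fun_prop)
  simpa [mul_pow] using h

lemma integral_sq_sum_mul_eq_sum (hX : Adapted 𝓕 X)
    (hξ : ∀ i j, i < j → Measurable[𝓕 j] (ξ i))
    (hindep : ∀ i, Indep (MeasurableSpace.comap (ξ i) inferInstance) (𝓕 i) P)
    (hXL2 : ∀ i, MemLp (X i) 2 P) (hξL2 : ∀ i, MemLp (ξ i) 2 P) (hξ_mean : ∀ i, P[ξ i] = 0)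
    (A : Finset ι) :
    ∫ ω, (∑ i ∈ A, X i ω * ξ i ω) ^ 2 ∂P = ∑ i ∈ A, (∫ ω, X i ω ^ 2 ∂P) * ∫ ω, ξ i ω ^ 2 ∂P := by
  have hZ := hX.memLp_two_mul_of_indep hindep hXL2 hξL2
  have hpair : ∀ i j, Integrable (fun ω => (X i ω * ξ i ω) * (X j ω * ξ j ω)) P :=
    fun i j => (hZ i).integrable_mul (hZ j)
  have hcross : ∀ i j, i ≠ j → ∫ ω, (X i ω * ξ i ω) * (X j ω * ξ j ω) ∂P = 0 := by
    intro i j hij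
    rcases hij.lt_or_gt with hij | hji
    · exact hX.integral_mul_mul_eq_zero_of_lt hξ hindep (fun i => (hξL2 i).1) hξ_mean hij
    · simp_rw [mul_comm (X i _ * ξ i _)]
      exact hX.integral_mul_mul_eq_zero_of_lt hξ hindep (fun i => (hξL2 i).1) hξ_mean hji
  simp_rw [sq, Finset.sum_mul_sum]
  rw [integral_finsetSum _ fun i _ => integrable_finsetSum _ fun j _ => hpair i j]
  refine Finset.sum_congr rfl fun i hi => ?_
  rw [integral_finsetSum _ fun j _ => hpair i j,
    Finset.sum_eq_single i (fun j _ hji => hcross i j hji.symm) (absurd hi)]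
  simpa [sq] using hX.integral_sq_mul_eq hindep (fun i => (hξL2 i).1) i

end MeasureTheory.Adapted

namespace IsTimeScaleBM

variable {Ω : Type*} [mΩ : MeasurableSpace Ω] {P : Measure Ω} {T : Set ℝ}
  {F : ℝ → MeasurableSpace Ω} {W : ℝ → Ω → ℝ}

lemma measurable_increment (hBM : IsTimeScaleBM T P F W) {s t u : ℝ} (hs : s ∈ T) (ht : t ∈ T)
    (hsu : s ≤ u) (htu : t ≤ u) : Measurable[F u] (fun ω => W t ω - W s ω) :=
  ((hBM.2.2.1 t (Or.inl ht)).mono (hBM.2.1 _ _ htu) le_rfl).sub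
    ((hBM.2.2.1 s (Or.inl hs)).mono (hBM.2.1 _ _ hsu) le_rfl)

lemma hasLaw_increment (hBM : IsTimeScaleBM T P F W) {s t : ℝ} (hs : s ∈ T) (ht : t ∈ T)
    (hst : s < t) : HasLaw (fun ω => W t ω - W s ω) (gaussianReal 0 (t - s).toNNReal) P where
  aemeasurable :=
    ((hBM.measurable_increment hs ht hst.le le_rfl).mono (hBM.1 t) le_rfl).aemeasurable
  map_eq := (hBM.2.2.2.2.1 s hs t ht hst).2

lemma indep_increment_sq_sub (hBM : IsTimeScaleBM T P F W) {s t : ℝ} (hs : s ∈ T) (ht : t ∈ T)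
    (hst : s < t) :
    Indep (MeasurableSpace.comap (fun ω => (W t ω - W s ω) ^ 2 - (t - s)) inferInstance) (F s) P :=
  indep_of_indep_of_le_left (hBM.2.2.2.2.1 s hs t ht hst).1
    (((measurable_id.pow_const 2).sub_const _).comp (comap_measurable _)).comap_le

lemma memLp_increment_sq_sub (hBM : IsTimeScaleBM T P F W) {s t : ℝ} (hs : s ∈ T) (ht : t ∈ T)
    (hst : s < t) : MemLp (fun ω => (W t ω - W s ω) ^ 2 - (t - s)) 2 P := by
  simpa [Real.coe_toNNReal _ (sub_nonneg.2 hst.le)] using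
    (hBM.hasLaw_increment hs ht hst).memLp_sq_sub

lemma integral_increment_sq_sub (hBM : IsTimeScaleBM T P F W) {s t : ℝ} (hs : s ∈ T) (ht : t ∈ T)
    (hst : s < t) : ∫ ω, ((W t ω - W s ω) ^ 2 - (t - s)) ∂P = 0 := by
  simpa [Real.coe_toNNReal _ (sub_nonneg.2 hst.le)] using
    (hBM.hasLaw_increment hs ht hst).integral_sq_sub

lemma integral_increment_sq_sub_sq (hBM : IsTimeScaleBM T P F W) {s t : ℝ} (hs : s ∈ T)
    (ht : t ∈ T) (hst : s < t) :
    ∫ ω, ((W t ω - W s ω) ^ 2 - (t - s)) ^ 2 ∂P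
      = (t - s) ^ 2 * ∫ x, (x ^ 2 - 1) ^ 2 ∂gaussianReal 0 1 := by
  simpa [Real.coe_toNNReal _ (sub_nonneg.2 hst.le)] using
    (hBM.hasLaw_increment hs ht hst).integral_sq_sub_sq

def partitionFiltration (hBM : IsTimeScaleBM T P F W) {m : ℕ} {σ : Fin (m + 1) → ℝ}
    (hσ : Monotone σ) : Filtration (Fin m) mΩ where
  seq i := F (σ i.castSucc)
  mono' _ _ hij := hBM.2.1 _ _ (hσ (Fin.castSucc_le_castSucc_iff.2 hij))
  le' _ := hBM.1 _

end IsTimeScaleBM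

def quadVarError {Ω : Type*} (f W : ℝ → Ω → ℝ) {m : ℕ} (σ : Fin (m + 1) → ℝ)
    (A : Finset (Fin m)) (ω : Ω) : ℝ :=
  ∑ i ∈ A, f (σ i.castSucc) ω *
    ((W (σ i.succ) ω - W (σ i.castSucc) ω) ^ 2 - (σ i.succ - σ i.castSucc))

namespace IsTimeScaleBM

variable {Ω : Type*} [mΩ : MeasurableSpace Ω] {P : Measure Ω} {T : Set ℝ}
  {F : ℝ → MeasurableSpace Ω} {W : ℝ → Ω → ℝ} {f : ℝ → Ω → ℝ} {m : ℕ} {σ : Fin (m + 1) → ℝ}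

lemma memLp_quadVarError (hBM : IsTimeScaleBM T P F W)
    (hf_adapted : ∀ t ∈ T, Measurable[F t] (f t)) (hf_L2 : ∀ t ∈ T, MemLp (f t) 2 P)
    (hσ : StrictMono σ) (hσT : ∀ i, σ i ∈ T) (A : Finset (Fin m)) :
    MemLp (quadVarError f W σ A) 2 P :=
  Adapted.memLp_two_sum_mul (𝓕 := hBM.partitionFiltration hσ.monotone)
    (fun _ => hf_adapted _ (hσT _))
    (fun _ => hBM.indep_increment_sq_sub (hσT _) (hσT _) (hσ Fin.castSucc_lt_succ))
    (fun _ => hf_L2 _ (hσT _))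
    (fun _ => hBM.memLp_increment_sq_sub (hσT _) (hσT _) (hσ Fin.castSucc_lt_succ)) A

lemma integral_quadVarError_sq (hBM : IsTimeScaleBM T P F W)
    (hf_adapted : ∀ t ∈ T, Measurable[F t] (f t)) (hf_L2 : ∀ t ∈ T, MemLp (f t) 2 P)
    (hσ : StrictMono σ) (hσT : ∀ i, σ i ∈ T) (A : Finset (Fin m)) :
    ∫ ω, quadVarError f W σ A ω ^ 2 ∂P
      = (∫ x, (x ^ 2 - 1) ^ 2 ∂gaussianReal 0 1) *
        ∑ i ∈ A, (∫ ω, f (σ i.castSucc) ω ^ 2 ∂P) * (σ i.succ - σ i.castSucc) ^ 2 := by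
  have hξ : ∀ i j : Fin m, i < j → Measurable[F (σ j.castSucc)] (fun ω =>
      (W (σ i.succ) ω - W (σ i.castSucc) ω) ^ 2 - (σ i.succ - σ i.castSucc)) := by
    intro i j hij
    have hle : σ i.succ ≤ σ j.castSucc := hσ.monotone (Fin.succ_le_castSucc_iff.2 hij)
    exact ((hBM.measurable_increment (hσT _) (hσT _)
      ((hσ Fin.castSucc_lt_succ).le.trans hle) hle).pow_const 2).sub_const _
  unfold quadVarError
  rw [Adapted.integral_sq_sum_mul_eq_sum (𝓕 := hBM.partitionFiltration hσ.monotone)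
    (fun _ => hf_adapted _ (hσT _)) hξ
    (fun _ => hBM.indep_increment_sq_sub (hσT _) (hσT _) (hσ Fin.castSucc_lt_succ))
    (fun _ => hf_L2 _ (hσT _))
    (fun _ => hBM.memLp_increment_sq_sub (hσT _) (hσT _) (hσ Fin.castSucc_lt_succ))
    (fun _ => hBM.integral_increment_sq_sub (hσT _) (hσT _) (hσ Fin.castSucc_lt_succ)) A,
    Finset.mul_sum]
  refine Finset.sum_congr rfl fun i _ => ?_
  rw [hBM.integral_increment_sq_sub_sq (hσT _) (hσT _) (hσ Fin.castSucc_lt_succ)]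
  ring


lemma integral_quadVarError_sq_le (hBM : IsTimeScaleBM T P F W)
    (hf_adapted : ∀ t ∈ T, Measurable[F t] (f t)) (hf_L2 : ∀ t ∈ T, MemLp (f t) 2 P)
    (hσ : StrictMono σ) (hσT : ∀ i, σ i ∈ T) {C : ℝ} (hC : ∀ i, ∫ ω, f (σ i) ω ^ 2 ∂P ≤ C)
    {A : Finset (Fin m)} {δ : ℝ} (hδ : 0 ≤ δ) (hA : ∀ i ∈ A, σ i.succ - σ i.castSucc ≤ δ) :
    ∫ ω, quadVarError f W σ A ω ^ 2 ∂P
      ≤ (∫ x, (x ^ 2 - 1) ^ 2 ∂gaussianReal 0 1) * C * δ * (σ (Fin.last m) - σ 0) := by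
  have hκ : 0 ≤ ∫ x, (x ^ 2 - 1) ^ 2 ∂gaussianReal 0 1 := integral_nonneg fun x => sq_nonneg _
  have hC0 : 0 ≤ C := (integral_nonneg fun ω => sq_nonneg _).trans (hC 0)
  rw [hBM.integral_quadVarError_sq hf_adapted hf_L2 hσ hσT]
  calc _ ≤ (∫ x, (x ^ 2 - 1) ^ 2 ∂gaussianReal 0 1) *
        ∑ i ∈ A, C * (σ i.succ - σ i.castSucc) ^ 2 := by
        gcongr with i
        exact hC _
    _ ≤ (∫ x, (x ^ 2 - 1) ^ 2 ∂gaussianReal 0 1) * C * (δ * (σ (Fin.last m) - σ 0)) := by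
        rw [← Finset.mul_sum, ← mul_assoc]
        gcongr
        exact Fin.sum_sq_succ_sub_castSucc_le hσ.monotone hδ hA
    _ = _ := by ring

end IsTimeScaleBM

theorem quadratic_variation_sum_tendsto_zero_general
    {Ω : Type*} [MeasurableSpace Ω] (P : Measure Ω)
    (T : Set ℝ)
    (F : ℝ → MeasurableSpace Ω) (W : ℝ → Ω → ℝ)
    (hBM : IsTimeScaleBM T P F W)
    (f : ℝ → Ω → ℝ)
    (hf_adapted : ∀ t ∈ T, @Measurable Ω ℝ (F t) _ (f t))
    (hf_L2 : ∀ t ∈ T, MemLp (f t) 2 P)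
    (t1 t2 : ℝ)
    (C : ℝ) (hC : ∀ t ∈ Set.Icc t1 t2 ∩ T, ∫ ω, (f t ω) ^ 2 ∂P ≤ C)
    (m : ℕ → ℕ) (s : (n : ℕ) → Fin (m n + 1) → ℝ)
    (hs0 : ∀ n, s n 0 = t1) (hsn : ∀ n, s n (Fin.last (m n)) = t2)
    (hmono : ∀ n, StrictMono (s n)) (hsT : ∀ n i, s n i ∈ T)
    (hfine : ∀ n, ∀ i : Fin (m n),
      tsRho T (s n i.succ) - s n i.castSucc < (2:ℝ)⁻¹ ^ n) :
    ∀ᵐ ω ∂P, Tendsto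
      (fun n : ℕ =>
        ∑ i ∈ Finset.univ.filter (fun i : Fin (m n) => tsRho T (s n i.succ) = s n i.succ),
          f (s n i.castSucc) ω *
            ((W (s n i.succ) ω - W (s n i.castSucc) ω) ^ 2 - (s n i.succ - s n i.castSucc)))
      atTop (𝓝 0) := by
  set A : ∀ n, Finset (Fin (m n)) := fun n =>
    Finset.univ.filter fun i => tsRho T (s n i.succ) = s n i.succ
  have hs_mem : ∀ n i, s n i ∈ Set.Icc t1 t2 ∩ T := fun n i =>
    ⟨⟨hs0 n ▸ (hmono n).monotone (Fin.zero_le i), hsn n ▸ (hmono n).monotone (Fin.le_last i)⟩,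
      hsT n i⟩
  have hbound : ∀ n, ∫ ω, quadVarError f W (s n) (A n) ω ^ 2 ∂P
      ≤ (∫ x, (x ^ 2 - 1) ^ 2 ∂gaussianReal 0 1) * C * (t2 - t1) * (2⁻¹ : ℝ) ^ n := by
    intro n
    have hA : ∀ i ∈ A n, s n i.succ - s n i.castSucc ≤ (2⁻¹ : ℝ) ^ n := fun i hi => by
      simpa [(Finset.mem_filter.1 hi).2] using (hfine n i).le
    have h := hBM.integral_quadVarError_sq_le hf_adapted hf_L2 (hmono n) (hsT n)
      (fun i => hC _ (hs_mem n i)) (by positivity) hA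
    rw [hs0, hsn] at h
    linarith
  refine ae_tendsto_zero_of_summable_integral_sq
    (fun n => (hBM.memLp_quadVarError hf_adapted hf_L2 (hmono n) (hsT n) (A n)).integrable_sq) ?_
  exact Summable.of_nonneg_of_le (fun n => integral_nonneg fun ω => sq_nonneg _) hbound
    ((summable_geometric_of_lt_one (by norm_num) (by norm_num)).mul_left _)

/-- Almost sure convergence of the class-(a) quadratic variation sums along the
family of partitions `π⁽ⁿ⁾`. -/
theorem quadratic_variation_sum_tendsto_zero
    {Ω : Type*} [MeasurableSpace Ω] (P : Measure Ω) [IsProbabilityMeasure P]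
    (T : Set ℝ) (hne : T.Nonempty) (hcl : IsClosed T)
    (F : ℝ → MeasurableSpace Ω) (W : ℝ → Ω → ℝ)
    (hBM : IsTimeScaleBM T P F W)
    (f : ℝ → Ω → ℝ)
    (hf_adapted : ∀ t ∈ T, @Measurable Ω ℝ (F t) _ (f t))
    (hf_L2 : ∀ t ∈ T, MemLp (f t) 2 P)
    (t1 t2 : ℝ) (h1 : t1 ∈ T) (h2 : t2 ∈ T) (h12 : t1 < t2)
    (C : ℝ) (hC : ∀ t ∈ Set.Icc t1 t2 ∩ T, ∫ ω, (f t ω) ^ 2 ∂P ≤ C)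
    (m : ℕ → ℕ) (s : (n : ℕ) → Fin (m n + 1) → ℝ)
    (hs0 : ∀ n, s n 0 = t1) (hsn : ∀ n, s n (Fin.last (m n)) = t2)
    (hmono : ∀ n, StrictMono (s n)) (hsT : ∀ n i, s n i ∈ T)
    (hfine : ∀ n, ∀ i : Fin (m n),
      tsRho T (s n i.succ) - s n i.castSucc < (2:ℝ)⁻¹ ^ n) :
    ∀ᵐ ω ∂P, Tendsto
      (fun n : ℕ =>
        ∑ i ∈ Finset.univ.filter (fun i : Fin (m n) => tsRho T (s n i.succ) = s n i.succ),
          f (s n i.castSucc) ω *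
            ((W (s n i.succ) ω - W (s n i.castSucc) ω) ^ 2 - (s n i.succ - s n i.castSucc)))
      atTop (𝓝 0) :=
  quadratic_variation_sum_tendsto_zero_general P T F W hBM f hf_adapted hf_L2 t1 t2 C hC m s hs0 hsn
    hmono hsT hfine
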